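/- For every positive integer n, ∑_{k=0}^{n-1} (-1)^k C(n-1, k) (γ + ln(k+1))/(k+1) = (1/n)(γ − ∑_{j=1}^n (-1)^j C(n, j) ln j). -/

import Mathlib

/-! Absorption, `C(n-1, k) / (k+1) = C(n, k+1) / n`, turns the left side into
`-(1/n) ∑_{j=1}^n (-1)^j C(n, j) (γ + ln j)`, and the alternating binomial sum
`∑_{j=1}^n (-1)^j C(n, j) = -1` extracts the `γ` term. -/

open Real MeasureTheory Finset

noncomputable def γ : ℝ := Real.eulerMascheroniConstant

theorem Finset.sum_Icc_one_eq_sum_range_succ {M : Type*} [AddCommMonoid M] (f : ℕ → M) (n : ℕ) :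
    ∑ j ∈ Icc 1 n, f j = ∑ k ∈ range n, f (k + 1) := by
  rw [range_eq_Ico, sum_Ico_add', zero_add, Ico_add_one_right_eq_Icc]

theorem sum_Icc_one_neg_one_pow_mul_choose {R : Type*} [Ring R] {n : ℕ} (hn : n ≠ 0) :
    ∑ j ∈ Icc 1 n, (-1 : R) ^ j * (n.choose j : R) = -1 := by
  have h := congrArg (Int.cast : ℤ → R) (Int.alternating_sum_range_choose_of_ne hn)
  push_cast at h
  rw [sum_range_succ'] at h
  rw [sum_Icc_one_eq_sum_range_succ]
  simpa using eq_neg_of_add_eq_zero_left h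

theorem choose_div_add_one {K : Type*} [Field K] [CharZero K] (m k : ℕ) :
    (m.choose k : K) / (k + 1) = ((m + 1).choose (k + 1) : K) / (m + 1) := by
  rw [div_eq_div_iff (Nat.cast_add_one_ne_zero k) (Nat.cast_add_one_ne_zero m)]
  norm_cast
  rw [mul_comm]
  exact Nat.add_one_mul_choose_eq m k

theorem sum_range_neg_one_pow_mul_choose_mul_div {K : Type*} [Field K] [CharZero K]
    (m : ℕ) (f : ℕ → K) :
    ∑ k ∈ range (m + 1), (-1 : K) ^ k * (m.choose k : K) * f (k + 1) / (k + 1)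
      = -(1 / (m + 1 : K)) * ∑ j ∈ Icc 1 (m + 1), (-1 : K) ^ j * ((m + 1).choose j : K) * f j := by
  rw [sum_Icc_one_eq_sum_range_succ, mul_sum]
  refine sum_congr rfl fun k _ => ?_
  rw [mul_div_right_comm, mul_div_assoc, choose_div_add_one]
  ring

theorem stmt12 (n : ℕ) (hn : 1 ≤ n) :
    ∑ k ∈ Finset.range n, (-1 : ℝ) ^ k * ((n - 1).choose k : ℝ) * (γ + Real.log ((k : ℝ) + 1)) / ((k : ℝ) + 1)
      = (1 / (n : ℝ)) * (γ - ∑ j ∈ Finset.Icc 1 n, (-1 : ℝ) ^ j * (n.choose j : ℝ) * Real.log j) := by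
  obtain ⟨m, rfl⟩ := Nat.exists_eq_add_of_le' hn
  have h := sum_range_neg_one_pow_mul_choose_mul_div m fun j : ℕ => γ + Real.log j
  push_cast at h
  rw [Nat.add_sub_cancel, h]
  simp only [mul_add, sum_add_distrib, ← sum_mul, sum_Icc_one_neg_one_pow_mul_choose m.succ_ne_zero,
    Nat.cast_add_one]
  ring
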